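/- Any Boolean function f on n variables with algebraic immunity at least a₀ ≥ 1 is non-degenerate on at least 2a₀ - 1 variables; equivalently, if f depends on fewer than 2a₀ - 1 variables then AI(f) < a₀. -/

import Mathlib

open Finset

abbrev BF (n : ℕ) := (Fin n → ZMod 2) → ZMod 2

def bfInner {n : ℕ} (a x : Fin n → ZMod 2) : ZMod 2 := ∑ i, a i * x i

def walsh {n : ℕ} (f : BF n) (a : Fin n → ZMod 2) : ℤ :=
  ∑ x : Fin n → ZMod 2, (-1 : ℤ) ^ ((f x + bfInner a x).val)

def hdist {n : ℕ} (f g : BF n) : ℕ :=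
  (Finset.univ.filter (fun x => f x ≠ g x)).card

def wt {n : ℕ} (a : Fin n → ZMod 2) : ℕ :=
  (Finset.univ.filter (fun i => a i ≠ 0)).card

def resilient {n : ℕ} (m : ℕ) (f : BF n) : Prop :=
  ∀ a, wt a ≤ m → walsh f a = 0

def balanced {n : ℕ} (f : BF n) : Prop :=
  (Finset.univ.filter (fun x => f x = 1)).card = 2 ^ (n - 1)

noncomputable def nl {n : ℕ} (f : BF n) : ℕ :=
  sInf {d | ∃ (a : Fin n → ZMod 2) (c : ZMod 2), d = hdist f (fun x => c + bfInner a x)}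

def anf {n : ℕ} (f : BF n) (a : Fin n → ZMod 2) : ZMod 2 :=
  ∑ x ∈ Finset.univ.filter (fun x : Fin n → ZMod 2 => ∀ i, a i = 0 → x i = 0), f x

def degree {n : ℕ} (f : BF n) : ℕ :=
  (Finset.univ.filter (fun a => anf f a ≠ 0)).sup wt

noncomputable def AI {n : ℕ} (f : BF n) : ℕ :=
  sInf {d | ∃ g : BF n, g ≠ 0 ∧ ((∀ x, g x * f x = 0) ∨ (∀ x, g x * (1 + f x) = 0)) ∧ degree g = d}

lemma zmod2_cases : ∀ u : ZMod 2, u = 0 ∨ u = 1 := by decide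
lemma zmod2_ne (u : ZMod 2) (h : u ≠ 0) : u = 1 := by rcases zmod2_cases u with h'|h' <;> simp_all

lemma card_agree (n : ℕ) (F : Finset (Fin n)) (g : Fin n → ZMod 2) :
    (univ.filter fun x : Fin n → ZMod 2 => ∀ i ∉ F, x i = g i).card = 2 ^ F.card := by
  rw [← Fintype.card_subtype]
  have e : {x : Fin n → ZMod 2 // ∀ i ∉ F, x i = g i} ≃ (F → ZMod 2) :=
    { toFun := fun x i => x.1 i
      invFun := fun p => ⟨fun i => if h : i ∈ F then p ⟨i, h⟩ else g i, by
        intro i hi; simp [hi]⟩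
      left_inv := by
        rintro ⟨x, hx⟩; ext i; by_cases h : i ∈ F <;> simp [h, hx i]
      right_inv := by
        intro p; ext i; simp }
  rw [Fintype.card_congr e]
  simp

def mon {n : ℕ} (a x : Fin n → ZMod 2) : ZMod 2 :=
  ∏ i ∈ univ.filter (fun i => a i ≠ 0), x i

lemma mon_eq_ite {n : ℕ} (a x : Fin n → ZMod 2) :
    mon a x = if (∀ i, a i ≠ 0 → x i = 1) then 1 else 0 := by
  by_cases h : ∀ i, a i ≠ 0 → x i = 1
  · rw [if_pos h]; unfold mon
    apply Finset.prod_eq_one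
    intro i hi; exact h i (by simpa using hi)
  · rw [if_neg h]; push_neg at h
    obtain ⟨i, hai, hxi⟩ := h
    unfold mon
    apply Finset.prod_eq_zero (i := i) (by simpa using hai)
    rcases zmod2_cases (x i) with h'|h' <;> simp_all

lemma sum_mon {n : ℕ} (a b : Fin n → ZMod 2) :
    ∑ x ∈ univ.filter (fun x : Fin n → ZMod 2 => ∀ i, b i = 0 → x i = 0), mon a x
      = if a = b then 1 else 0 := by
  have h1 : ∀ x ∈ univ.filter (fun x : Fin n → ZMod 2 => ∀ i, b i = 0 → x i = 0),
      mon a x = if (∀ i, a i ≠ 0 → x i = 1) then (1 : ZMod 2) else 0 :=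
    fun x _ => mon_eq_ite a x
  rw [Finset.sum_congr rfl h1, Finset.sum_boole, Finset.filter_filter]
  by_cases hab : a = b
  · subst hab
    rw [if_pos rfl]
    have hset : (univ.filter fun x : Fin n → ZMod 2 =>
        (∀ i, a i = 0 → x i = 0) ∧ ∀ i, a i ≠ 0 → x i = 1) = {a} := by
      ext x
      simp only [mem_filter, mem_univ, true_and, mem_singleton]
      constructor
      · rintro ⟨h0, h2⟩
        funext i
        rcases zmod2_cases (a i) with h'|h'
        · rw [h0 i h', h']
        · rw [h2 i (by rw [h']; exact one_ne_zero), h']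
      · rintro rfl
        exact ⟨fun i h => h, fun i h => zmod2_ne _ h⟩
    rw [hset]; simp
  · rw [if_neg hab]
    by_cases hle : ∀ i, a i ≠ 0 → b i ≠ 0
    · set F : Finset (Fin n) := univ.filter fun i => b i ≠ 0 ∧ a i = 0 with hFdef
      have hmemF : ∀ i, i ∈ F ↔ (b i ≠ 0 ∧ a i = 0) := by
        intro i; rw [hFdef, mem_filter]; simp
      have heq : (univ.filter fun x : Fin n → ZMod 2 =>
          (∀ i, b i = 0 → x i = 0) ∧ ∀ i, a i ≠ 0 → x i = 1)
          = univ.filter (fun x => ∀ i ∉ F, x i = a i) := by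
        ext x
        simp only [mem_filter, mem_univ, true_and]
        constructor
        · rintro ⟨h0, h2⟩ i hi
          rw [hmemF, not_and] at hi
          rcases zmod2_cases (a i) with h'|h'
          · have hb : b i = 0 := by
              by_contra hb
              exact (hi hb) h'
            rw [h0 i hb, h']
          · rw [h2 i (by rw [h']; exact one_ne_zero), h']
        · intro hx
          constructor
          · intro i hb
            have hai : a i = 0 := by
              rcases zmod2_cases (a i) with h'|h'
              · exact h'
              · exact absurd hb (hle i (by rw [h']; exact one_ne_zero))
            have hni : i ∉ F := by rw [hmemF]; exact fun hc => hc.1 hb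
            rw [hx i hni, hai]
          · intro i hai
            have hni : i ∉ F := by rw [hmemF]; exact fun hc => hai hc.2
            rw [hx i hni]; exact zmod2_ne _ hai
      rw [heq, card_agree]
      have hF : F.Nonempty := by
        have : ∃ i, a i ≠ b i := by
          by_contra hc; push_neg at hc; exact hab (funext hc)
        obtain ⟨i, hi⟩ := this
        refine ⟨i, ?_⟩
        rw [hmemF]
        rcases zmod2_cases (a i) with h'|h'
        · refine ⟨?_, h'⟩
          intro hb
          exact hi (by rw [h', hb])
        · have hb : b i = 1 := zmod2_ne _ (hle i (by rw [h']; exact one_ne_zero))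
          exact absurd (h'.trans hb.symm) hi
      have hpos : 0 < F.card := Finset.card_pos.mpr hF
      push_cast
      rw [show ((2 : ZMod 2)) = 0 by decide, zero_pow (by omega)]
    · push_neg at hle
      obtain ⟨i, hai, hbi⟩ := hle
      have hset : (univ.filter fun x : Fin n → ZMod 2 =>
          (∀ i, b i = 0 → x i = 0) ∧ ∀ i, a i ≠ 0 → x i = 1) = ∅ := by
        rw [Finset.filter_eq_empty_iff]
        rintro x - ⟨h0, h2⟩
        have e1 := h0 i hbi
        have e2 := h2 i hai
        simp_all
      rw [hset]; simp

def poly {n : ℕ} (c : (Fin n → ZMod 2) → ZMod 2) : BF n :=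
  fun x => ∑ a, c a * mon a x

lemma anf_poly {n : ℕ} (c : (Fin n → ZMod 2) → ZMod 2) (b : Fin n → ZMod 2) :
    anf (poly c) b = c b := by
  unfold anf poly
  rw [Finset.sum_comm]
  have : ∀ a : Fin n → ZMod 2,
      ∑ x ∈ univ.filter (fun x : Fin n → ZMod 2 => ∀ i, b i = 0 → x i = 0), c a * mon a x
        = c a * (if a = b then 1 else 0) := by
    intro a; rw [← Finset.mul_sum, sum_mon]
  rw [Finset.sum_congr rfl (fun a _ => this a)]
  simp [mul_ite]

lemma poly_ne_zero {n : ℕ} (c : (Fin n → ZMod 2) → ZMod 2) (hc : c ≠ 0) : poly c ≠ 0 := by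
  intro h
  apply hc
  funext b
  have := anf_poly c b
  rw [h] at this
  rw [← this]
  unfold anf
  simp

lemma degree_poly_le {n : ℕ} (c : (Fin n → ZMod 2) → ZMod 2) (d : ℕ)
    (hc : ∀ a, c a ≠ 0 → wt a ≤ d) : degree (poly c) ≤ d := by
  apply Finset.sup_le
  intro a ha
  rw [Finset.mem_filter, anf_poly] at ha
  exact hc a ha.2
theorem AI_nondegenerate (n a₀ : ℕ) (f : BF n) (ha : 1 ≤ a₀) (hAI : a₀ ≤ AI f) :
    2 * a₀ - 1 ≤
      Set.ncard {i : Fin n | ∃ x y : Fin n → ZMod 2,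
        (∀ j, j ≠ i → x j = y j) ∧ f x ≠ f y} := by
  classical
  set S := {i : Fin n | ∃ x y : Fin n → ZMod 2, (∀ j, j ≠ i → x j = y j) ∧ f x ≠ f y} with hS
  have hSfin : S.Finite := Set.toFinite S
  set T := hSfin.toFinset with hT
  set k := T.card with hkdef
  have hncard : S.ncard = k := by rw [Set.ncard_eq_toFinset_card S hSfin]
  set d := (k + 1) / 2 with hd
  -- degenerate coordinates
  have hdeg : ∀ i ∉ T, ∀ x y : Fin n → ZMod 2, (∀ j, j ≠ i → x j = y j) → f x = f y := by
    intro i hi x y hxy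
    by_contra hne
    exact hi (hSfin.mem_toFinset.mpr ⟨x, y, hxy, hne⟩)
  -- f depends only on coordinates in T
  have hargue : ∀ m : ℕ, ∀ x y : Fin n → ZMod 2,
      (univ.filter fun j => x j ≠ y j).card ≤ m → (∀ j ∈ T, x j = y j) → f x = f y := by
    intro m
    induction m with
    | zero =>
      intro x y hc hagree
      have hemp : (univ.filter fun j => x j ≠ y j) = ∅ :=
        Finset.card_eq_zero.mp (Nat.le_zero.mp hc)
      have hxy : x = y := by
        funext j
        by_contra hj
        have : j ∈ univ.filter fun j => x j ≠ y j := by simp [hj]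
        rw [hemp] at this
        exact absurd this (Finset.notMem_empty j)
      rw [hxy]
    | succ m ih =>
      intro x y hc hagree
      by_cases hxy : x = y
      · rw [hxy]
      · have : ∃ j, x j ≠ y j := by
          by_contra hcon; push_neg at hcon; exact hxy (funext hcon)
        obtain ⟨j, hj⟩ := this
        have hjT : j ∉ T := fun hjT => hj (hagree j hjT)
        set x' := Function.update x j (y j) with hx'
        have h1 : f x = f x' := by
          apply hdeg j hjT
          intro l hl
          rw [hx', Function.update_of_ne hl]
        have hsub : (univ.filter fun l => x' l ≠ y l)
            ⊆ (univ.filter fun l => x l ≠ y l).erase j := by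
          intro l hl
          rw [Finset.mem_filter] at hl
          have hlj : l ≠ j := by
            intro h
            subst h
            exact hl.2 (by rw [hx', Function.update_self])
          rw [Finset.mem_erase]
          refine ⟨hlj, ?_⟩
          rw [Finset.mem_filter]
          refine ⟨Finset.mem_univ l, ?_⟩
          rw [hx', Function.update_of_ne hlj] at hl
          exact hl.2
        have hjm : j ∈ univ.filter fun l => x l ≠ y l := by simp [hj]
        have hcount : (univ.filter fun l => x' l ≠ y l).card ≤ m := by
          have := Finset.card_le_card hsub
          rw [Finset.card_erase_of_mem hjm] at this
          omega
        have h2 : f x' = f y := by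
          apply ih x' y hcount
          intro l hlT
          by_cases hlj : l = j
          · subst hlj; rw [hx', Function.update_self]
          · rw [hx', Function.update_of_ne hlj]; exact hagree l hlT
        rw [h1, h2]
  have hdep : ∀ x y : Fin n → ZMod 2, (∀ j ∈ T, x j = y j) → f x = f y :=
    fun x y h => hargue _ x y le_rfl h
  -- the mask
  set mask : (Fin n → ZMod 2) → (Fin n → ZMod 2) :=
    fun x j => if j ∈ T then x j else 0 with hmaskdef
  have hmask_f : ∀ x, f (mask x) = f x := by
    intro x
    apply hdep
    intro j hj
    simp [hmaskdef, hj]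
  -- the cube on T
  set E : Finset (Fin n → ZMod 2) := univ.filter (fun x => ∀ j ∉ T, x j = 0) with hE
  have hmemE : ∀ x, x ∈ E ↔ ∀ j ∉ T, x j = 0 := by
    intro x; rw [hE, Finset.mem_filter]; simp
  have hcardE : E.card = 2 ^ k := by
    rw [hE, hkdef]
    have : (univ.filter (fun x : Fin n → ZMod 2 => ∀ j ∉ T, x j = 0))
        = (univ.filter (fun x : Fin n → ZMod 2 => ∀ j ∉ T, x j = (fun _ => (0 : ZMod 2)) j)) := rfl
    rw [this, card_agree]
  have hmaskE : ∀ x, mask x ∈ E := by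
    intro x
    rw [hmemE]
    intro j hj
    simp [hmaskdef, hj]
  have hwtE : ∀ a ∈ E, (univ.filter fun i => a i ≠ 0) ⊆ T := by
    intro a haE i hi
    rw [Finset.mem_filter] at hi
    by_contra hiT
    exact hi.2 ((hmemE a).mp haE i hiT)
  -- low and high weight parts
  set P : Finset (Fin n → ZMod 2) := E.filter (fun a => wt a ≤ d) with hP
  set Q : Finset (Fin n → ZMod 2) := E.filter (fun a => ¬ wt a ≤ d) with hQ
  have hPQ : P.card + Q.card = 2 ^ k := by
    rw [hP, hQ, Finset.card_filter_add_card_filter_not, hcardE]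
  -- the complement injection
  have hQP : Q.card < P.card := by
    rcases Finset.eq_empty_or_nonempty Q with hQe | hQe
    · rw [hQe]
      simp only [Finset.card_empty]
      have : 0 < P.card + Q.card := by rw [hPQ]; positivity
      rw [hQe] at this
      simpa using this
    · -- Q nonempty: k ≥ d + 1
      obtain ⟨a₁, ha₁⟩ := hQe
      rw [hQ, Finset.mem_filter] at ha₁
      have hwa₁ : wt a₁ ≤ k := by
        rw [hkdef]
        exact Finset.card_le_card (hwtE a₁ ha₁.1)
      have hdk : d + 1 ≤ k := by omega
      -- witness of weight exactly d
      obtain ⟨T', hT'sub, hT'card⟩ := Finset.exists_subset_card_eq (s := T) (n := d) (by omega)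
      set b : Fin n → ZMod 2 := fun i => if i ∈ T' then 1 else 0 with hb
      have hbfilter : (univ.filter fun i => b i ≠ 0) = T' := by
        ext i
        rw [Finset.mem_filter, hb]
        by_cases h : i ∈ T' <;> simp [h]
      have hbE : b ∈ E := by
        rw [hmemE]
        intro j hj
        rw [hb]
        have : j ∉ T' := fun h => hj (hT'sub h)
        simp [this]
      have hbP : b ∈ P := by
        rw [hP, Finset.mem_filter]
        exact ⟨hbE, by rw [wt, hbfilter, hT'card]⟩
      set comp : (Fin n → ZMod 2) → (Fin n → ZMod 2) :=
        fun a i => if i ∈ T then a i + 1 else 0 with hcomp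
      have hcompwt : ∀ a ∈ E, wt (comp a) = k - wt a := by
        intro a haE
        have : (univ.filter fun i => comp a i ≠ 0) = T \ (univ.filter fun i => a i ≠ 0) := by
          ext i
          rw [Finset.mem_filter, Finset.mem_sdiff, Finset.mem_filter, hcomp]
          by_cases hiT : i ∈ T
          · simp only [hiT, if_true, mem_univ, true_and]
            rcases zmod2_cases (a i) with h'|h' <;> simp [h'] <;> decide
          · simp [hiT]
        rw [wt, this, Finset.card_sdiff_of_subset (hwtE a haE), ← hkdef, wt]
      have hcompE : ∀ a, comp a ∈ E := by
        intro a
        rw [hmemE]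
        intro j hj
        simp [hcomp, hj]
      have hcompinv : ∀ a ∈ E, comp (comp a) = a := by
        intro a haE
        funext i
        by_cases hiT : i ∈ T
        · simp only [hcomp, hiT, if_true]
          have : (1 : ZMod 2) + 1 = 0 := by decide
          rw [add_assoc, this, add_zero]
        · simp only [hcomp, hiT, if_false]
          exact ((hmemE a).mp haE i hiT).symm
      have hmaps : ∀ a ∈ Q, comp a ∈ P.erase b := by
        intro a haQ
        rw [hQ, Finset.mem_filter] at haQ
        have hwa : wt a ≤ k := Finset.card_le_card (hwtE a haQ.1)
        have hwc : wt (comp a) = k - wt a := hcompwt a haQ.1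
        rw [Finset.mem_erase]
        constructor
        · intro hcb
          have : wt b = d := by rw [wt, hbfilter, hT'card]
          rw [← hcb, hwc] at this
          omega
        · rw [hP, Finset.mem_filter]
          exact ⟨hcompE a, by rw [hwc]; omega⟩
      have hinj : Set.InjOn comp Q := by
        intro a haQ a' ha'Q heq
        have h1 : a ∈ E := (Finset.mem_filter.mp haQ).1
        have h2 : a' ∈ E := (Finset.mem_filter.mp ha'Q).1
        rw [← hcompinv a h1, heq, hcompinv a' h2]
      have hle1 := Finset.card_le_card_of_injOn comp hmaps hinj
      have hle2 := Finset.card_erase_of_mem hbP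
      have hle3 : 0 < P.card := Finset.card_pos.mpr ⟨b, hbP⟩
      omega
  -- split f's support over E
  set Wf : Finset (Fin n → ZMod 2) := E.filter (fun x => f x ≠ 0) with hWf
  set Wg : Finset (Fin n → ZMod 2) := E.filter (fun x => ¬ f x ≠ 0) with hWg
  have hWfg : Wf.card + Wg.card = 2 ^ k := by
    rw [hWf, hWg, Finset.card_filter_add_card_filter_not, hcardE]
  have hPcard : 2 ^ k < 2 * P.card := by omega
  have hsmall : Wf.card < P.card ∨ Wg.card < P.card := by omega
  -- the kernel construction
  have hker : ∀ W : Finset (Fin n → ZMod 2), W.card < P.card →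
      ∃ c : (Fin n → ZMod 2) → ZMod 2, c ≠ 0 ∧ (∀ a, c a ≠ 0 → a ∈ P) ∧
        ∀ w ∈ W, poly c w = 0 := by
    intro W hW
    set ext : (P → ZMod 2) → ((Fin n → ZMod 2) → ZMod 2) :=
      fun p a => if h : a ∈ P then p ⟨a, h⟩ else 0 with hext
    set Φ : (P → ZMod 2) → (W → ZMod 2) := fun p w => poly (ext p) w.1 with hΦ
    have hcard : Fintype.card (W → ZMod 2) < Fintype.card (P → ZMod 2) := by
      rw [Fintype.card_fun, Fintype.card_fun]
      simp only [Fintype.card_coe]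
      exact Nat.pow_lt_pow_right (by norm_num) hW
    obtain ⟨p, q, hpq, hΦpq⟩ := Fintype.exists_ne_map_eq_of_card_lt Φ hcard
    refine ⟨ext p - ext q, ?_, ?_, ?_⟩
    · intro h
      apply hpq
      funext a
      have := congrFun h a.1
      simp only [hext, Pi.sub_apply, Pi.zero_apply, dif_pos a.2] at this
      have : p ⟨a.1, a.2⟩ - q ⟨a.1, a.2⟩ = 0 := this
      have := sub_eq_zero.mp this
      simpa using this
    · intro a hc
      by_contra haP
      apply hc
      simp [hext, Pi.sub_apply, dif_neg haP]
    · intro w hw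
      have h1 : poly (ext p - ext q) w = poly (ext p) w - poly (ext q) w := by
        unfold poly
        rw [← Finset.sum_sub_distrib]
        congr 1
        funext a
        rw [Pi.sub_apply, sub_mul]
      rw [h1]
      have := congrFun hΦpq ⟨w, hw⟩
      simp only [hΦ] at this
      rw [this, sub_self]
  -- get the annihilator on the relevant side
  have hann : ∃ (g : BF n), g ≠ 0 ∧
      ((∀ x, g x * f x = 0) ∨ (∀ x, g x * (1 + f x) = 0)) ∧ degree g ≤ d := by
    have key : ∀ (h : BF n), (∀ x, h (mask x) = h x) →
        (E.filter (fun x => h x ≠ 0)).card < P.card →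
        ∃ (g : BF n), g ≠ 0 ∧ (∀ x, g x * h x = 0) ∧ degree g ≤ d := by
      intro h hmask hsize
      obtain ⟨c, hc0, hcP, hcW⟩ := hker _ hsize
      refine ⟨poly c, poly_ne_zero c hc0, ?_, ?_⟩
      · intro x
        rcases zmod2_cases (h x) with h'|h'
        · rw [h', mul_zero]
        · have hmx : mask x ∈ E.filter (fun x => h x ≠ 0) := by
            rw [Finset.mem_filter]
            refine ⟨hmaskE x, ?_⟩
            rw [hmask x, h']
            exact one_ne_zero
          have hg0 : poly c (mask x) = 0 := hcW _ hmx
          have hgm : poly c x = poly c (mask x) := by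
            unfold poly
            apply Finset.sum_congr rfl
            intro a _
            rcases eq_or_ne (c a) 0 with hca | hca
            · rw [hca, zero_mul, zero_mul]
            · congr 1
              unfold mon
              apply Finset.prod_congr rfl
              intro i hi
              have hiT : i ∈ T := hwtE a (Finset.mem_filter.mp (hcP a hca)).1 hi
              simp [hmaskdef, hiT]
          rw [hgm, hg0, zero_mul]
      · apply degree_poly_le
        intro a hca
        exact (Finset.mem_filter.mp (hcP a hca)).2
    rcases hsmall with hside | hside
    · obtain ⟨g, hg0, hann, hdeg'⟩ := key f hmask_f hside
      exact ⟨g, hg0, Or.inl hann, hdeg'⟩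
    · have h1f : ∀ x, (fun x => 1 + f x) (mask x) = (fun x => 1 + f x) x := by
        intro x; simp only; rw [hmask_f]
      have hsize : (E.filter (fun x => (fun x => 1 + f x) x ≠ 0)).card < P.card := by
        have : E.filter (fun x => (fun x => 1 + f x) x ≠ 0) = Wg := by
          rw [hWg]
          apply Finset.filter_congr
          intro x _
          simp only [not_not]
          constructor
          · intro h1
            rcases zmod2_cases (f x) with h'|h'
            · exact h'
            · exact absurd (by rw [h']; decide) h1
          · intro h1
            rw [h1]
            decide
        rw [this]
        exact hside
      obtain ⟨g, hg0, hann, hdeg'⟩ := key _ h1f hsize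
      exact ⟨g, hg0, Or.inr hann, hdeg'⟩
  -- conclude
  obtain ⟨g, hg0, hgann, hgdeg⟩ := hann
  have hAIle : AI f ≤ degree g := Nat.sInf_le ⟨g, hg0, hgann, rfl⟩
  have : a₀ ≤ d := le_trans hAI (le_trans hAIle hgdeg)
  rw [hncard]
  omega
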